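/- Let Q_1, …, Q_J ∈ ℂ^{n×n} be Hermitian positive semidefinite, y_1, …, y_J ≥ 0, ε > 0, and L_ε(z) = Σ_{j=1}^J (√(z* Q_j z + ε) − √(y_j + ε))². Then for all z, u ∈ ℂ^n the second directional derivative of L_ε satisfies d²/dt² L_ε(z + t u)|_{t=0} ≤ 2 ‖Σ_{j=1}^J Q_j‖ · ‖u‖₂², where ‖·‖ denotes the spectral norm. -/

import Mathlib

open Matrix
open scoped ComplexOrder

/-- Spectral (operator 2-) norm of a square complex matrix. -/
noncomputable def specNorm {n : Type*} [Fintype n] [DecidableEq n] (A : Matrix n n ℂ) : ℝ :=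
  ‖Matrix.toEuclideanCLM (𝕜 := ℂ) A‖

lemma sqrtQuadDeriv1 (a b c s ε : ℝ) (hP : ∀ x : ℝ, 0 < c*x^2 + 2*b*x + a + ε) (t : ℝ) :
    HasDerivAt (fun x => (Real.sqrt (c*x^2 + 2*b*x + a + ε) - s)^2)
      ((2*c*t + 2*b) - s*(2*c*t + 2*b)/Real.sqrt (c*t^2 + 2*b*t + a + ε)) t := by
  have hPt := hP t
  have hp : HasDerivAt (fun x : ℝ => c*x^2 + 2*b*x + a + ε) (2*c*t + 2*b) t := by
    have h1 : HasDerivAt (fun x : ℝ => c*x^2) (c*(2*t)) t := by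
      simpa using (hasDerivAt_pow 2 t).const_mul c
    have h2 : HasDerivAt (fun x : ℝ => 2*b*x) (2*b) t := by
      simpa using (hasDerivAt_id t).const_mul (2*b)
    have := ((h1.add h2).add_const (a + ε))
    have e : (fun x : ℝ => c*x^2 + 2*b*x + a + ε)
        = fun x => ((fun x : ℝ => c * x ^ 2) + fun x => 2 * b * x) x + (a + ε) := by
      funext x; simp only [Pi.add_apply]; ring
    rw [e]; exact this.congr_deriv (by ring)
  have hg : HasDerivAt (fun x => Real.sqrt (c*x^2 + 2*b*x + a + ε))
      ((2*c*t + 2*b)/(2*Real.sqrt (c*t^2 + 2*b*t + a + ε))) t := by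
    have := (Real.hasDerivAt_sqrt (ne_of_gt hPt)).comp t hp
    exact this.congr_deriv (by ring)
  have hg0 : Real.sqrt (c*t^2 + 2*b*t + a + ε) ≠ 0 := (Real.sqrt_pos.mpr hPt).ne'
  have hf := (hg.sub_const s).pow 2
  refine hf.congr_deriv ?_
  linear_combination (2*c*t + 2*b) * mul_inv_cancel₀ hg0

lemma sqrtQuadDeriv2 (a b c s ε : ℝ) (hε : 0 < ε) (hs : 0 ≤ s) (hc : 0 ≤ c)
    (hb : b^2 ≤ c*a) (hP : ∀ x : ℝ, 0 < c*x^2 + 2*b*x + a + ε) :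
    ∃ d, d ≤ 2*c ∧
      HasDerivAt (fun t => (2*c*t + 2*b) - s*(2*c*t + 2*b)/Real.sqrt (c*t^2 + 2*b*t + a + ε)) d 0 := by
  have hP0 := hP 0
  set g0 : ℝ := Real.sqrt (c*(0:ℝ)^2 + 2*b*0 + a + ε) with hg0def
  have hg0pos : 0 < g0 := Real.sqrt_pos.mpr hP0
  have hg0 : g0 ≠ 0 := hg0pos.ne'
  have hg0sq : g0^2 = a + ε := by
    rw [hg0def, Real.sq_sqrt hP0.le]; ring
  have hp : HasDerivAt (fun x : ℝ => c*x^2 + 2*b*x + a + ε) (2*c*0 + 2*b) (0:ℝ) := by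
    have h1 : HasDerivAt (fun x : ℝ => c*x^2) (c*(2*0)) (0:ℝ) := by
      simpa using (hasDerivAt_pow 2 (0:ℝ)).const_mul c
    have h2 : HasDerivAt (fun x : ℝ => 2*b*x) (2*b) (0:ℝ) := by
      simpa using (hasDerivAt_id (0:ℝ)).const_mul (2*b)
    have := ((h1.add h2).add_const (a + ε))
    have e : (fun x : ℝ => c*x^2 + 2*b*x + a + ε)
        = fun x => ((fun x : ℝ => c * x ^ 2) + fun x => 2 * b * x) x + (a + ε) := by
      funext x; simp only [Pi.add_apply]; ring
    rw [e]; exact this.congr_deriv (by ring)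
  have hg : HasDerivAt (fun x => Real.sqrt (c*x^2 + 2*b*x + a + ε))
      (1/(2*g0) * (2*c*0 + 2*b)) (0:ℝ) :=
    (Real.hasDerivAt_sqrt (ne_of_gt hP0)).comp 0 hp
  have hnum : HasDerivAt (fun t : ℝ => s*(2*c*t + 2*b)) (s*(2*c)) (0:ℝ) := by
    have h2 : HasDerivAt (fun x : ℝ => 2*c*x + 2*b) (2*c) (0:ℝ) := by
      simpa using ((hasDerivAt_id (0:ℝ)).const_mul (2*c)).add_const (2*b)
    simpa using h2.const_mul s
  have hlin : HasDerivAt (fun t : ℝ => 2*c*t + 2*b) (2*c) (0:ℝ) := by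
    simpa using ((hasDerivAt_id (0:ℝ)).const_mul (2*c)).add_const (2*b)
  have hdiv := hnum.div hg hg0
  refine ⟨_, ?_, hlin.sub hdiv⟩
  have key : 0 ≤ (s*(2*c) * g0 - s*(2*c*0 + 2*b) * (1/(2*g0) * (2*c*0 + 2*b))) / g0^2 := by
    apply div_nonneg _ (sq_nonneg _)
    have h1 : s*(2*c) * g0 - s*(2*c*0 + 2*b) * (1/(2*g0) * (2*c*0 + 2*b))
        = 2*s*(c*g0^2 - b^2)/g0 := by
      field_simp
      ring
    rw [h1]
    apply div_nonneg _ hg0pos.le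
    have : b^2 ≤ c*g0^2 := by
      rw [hg0sq]
      calc b^2 ≤ c*a := hb
        _ ≤ c*(a+ε) := by nlinarith
    nlinarith
  simp only [hg0def] at key ⊢
  linarith

lemma quad_expand {n : ℕ} (Q : Matrix (Fin n) (Fin n) ℂ) (hQ : Q.IsHermitian)
    (z u : Fin n → ℂ) (t : ℝ) :
    (star (z + t • u) ⬝ᵥ (Q *ᵥ (z + t • u))).re
      = (star u ⬝ᵥ (Q *ᵥ u)).re * t^2 + 2*(star z ⬝ᵥ (Q *ᵥ u)).re * t
        + (star z ⬝ᵥ (Q *ᵥ z)).re := by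
  have hsym : (star u ⬝ᵥ (Q *ᵥ z)).re = (star z ⬝ᵥ (Q *ᵥ u)).re := by
    have h1 : star (star z ⬝ᵥ (Q *ᵥ u)) = star u ⬝ᵥ (Q *ᵥ z) := by
      rw [star_dotProduct, star_star, star_mulVec, hQ.eq, dotProduct_mulVec]
    calc (star u ⬝ᵥ (Q *ᵥ z)).re = (star (star z ⬝ᵥ (Q *ᵥ u))).re := by rw [h1]
      _ = (star z ⬝ᵥ (Q *ᵥ u)).re := by simp [Complex.star_def]
  have hstar : star (z + t • u) = star z + t • star u := by
    simp [star_smul, star_trivial]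
  rw [hstar, mulVec_add, mulVec_smul]
  simp only [add_dotProduct, dotProduct_add, smul_dotProduct, dotProduct_smul,
    Complex.add_re, Complex.smul_re]
  rw [hsym]
  simp only [smul_eq_mul]
  ring

lemma re_dot_le {n : ℕ} (A : Matrix (Fin n) (Fin n) ℂ) (u : Fin n → ℂ) :
    (star u ⬝ᵥ (A *ᵥ u)).re ≤ ‖Matrix.toEuclideanCLM (𝕜 := ℂ) A‖ * ∑ i, ‖u i‖^2 := by
  set U : EuclideanSpace ℂ (Fin n) := (WithLp.equiv 2 (Fin n → ℂ)).symm u with hU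
  have h1 : (inner ℂ U (Matrix.toEuclideanCLM (𝕜 := ℂ) A U) : ℂ) = star u ⬝ᵥ (A *ᵥ u) := by
    rw [hU, WithLp.equiv_symm_apply, Matrix.toEuclideanCLM_toLp, EuclideanSpace.inner_toLp_toLp,
      dotProduct_comm]
  have h2 : ‖U‖^2 = ∑ i, ‖u i‖^2 := by
    rw [EuclideanSpace.norm_eq, Real.sq_sqrt (by positivity)]
    simp [hU]
  calc (star u ⬝ᵥ (A *ᵥ u)).re = (inner ℂ U (Matrix.toEuclideanCLM (𝕜 := ℂ) A U) : ℂ).re := by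
        rw [h1]
    _ ≤ ‖(inner ℂ U (Matrix.toEuclideanCLM (𝕜 := ℂ) A U) : ℂ)‖ := Complex.re_le_norm _
    _ ≤ ‖U‖ * ‖Matrix.toEuclideanCLM (𝕜 := ℂ) A U‖ := norm_inner_le_norm _ _
    _ ≤ ‖U‖ * (‖Matrix.toEuclideanCLM (𝕜 := ℂ) A‖ * ‖U‖) := by
        gcongr
        exact (Matrix.toEuclideanCLM (𝕜 := ℂ) A).le_opNorm U
    _ = ‖Matrix.toEuclideanCLM (𝕜 := ℂ) A‖ * ‖U‖^2 := by ring
    _ = _ := by rw [h2]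

/-- For the regularized amplitude loss
`L_ε(z) = Σ_j (√(z*Q_j z + ε) − √(y_j + ε))²` with Hermitian positive semidefinite `Q_j`,
`y_j ≥ 0`, `ε > 0`, the Wirtinger Hessian quadratic form (the second directional
derivative `d²/dt² L_ε(z+tu)|_{t=0}`) is bounded by `2‖Σ_j Q_j‖·‖u‖₂²` (spectral norm,
Euclidean vector norm `‖u‖₂² = Σ_i ‖u_i‖²`). -/
theorem stmt5 {n J : ℕ} (Q : Fin J → Matrix (Fin n) (Fin n) ℂ)
    (hQ : ∀ j, (Q j).PosSemidef)
    (y : Fin J → ℝ) (hy : ∀ j, 0 ≤ y j) (ε : ℝ) (hε : 0 < ε)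
    (z u : Fin n → ℂ) :
    iteratedDeriv 2
      (fun t : ℝ =>
        ∑ j, (Real.sqrt ((star (z + t • u) ⬝ᵥ ((Q j) *ᵥ (z + t • u))).re + ε)
              - Real.sqrt (y j + ε)) ^ 2) 0
      ≤ 2 * specNorm (∑ j, Q j) * ∑ i, ‖u i‖ ^ 2 := by
  set a : Fin J → ℝ := fun j => (star z ⬝ᵥ ((Q j) *ᵥ z)).re with ha_def
  set b : Fin J → ℝ := fun j => (star z ⬝ᵥ ((Q j) *ᵥ u)).re with hb_def
  set c : Fin J → ℝ := fun j => (star u ⬝ᵥ ((Q j) *ᵥ u)).re with hc_def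
  set s : Fin J → ℝ := fun j => Real.sqrt (y j + ε) with hs_def
  have hnonneg : ∀ j, ∀ x : ℝ, 0 ≤ c j * x^2 + 2 * b j * x + a j := by
    intro j x
    have := (hQ j).re_dotProduct_nonneg (z + x • u)
    simp only [RCLike.re_to_complex] at this
    rwa [quad_expand (Q j) (hQ j).1 z u x] at this
  have hP : ∀ j, ∀ x : ℝ, 0 < c j * x^2 + 2 * b j * x + a j + ε := by
    intro j x
    have := hnonneg j x
    linarith
  have hc : ∀ j, 0 ≤ c j := by
    intro j
    have := (hQ j).re_dotProduct_nonneg u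
    simpa only [RCLike.re_to_complex] using this
  have hb : ∀ j, (b j)^2 ≤ c j * a j := by
    intro j
    have hd : discrim (c j) (2 * b j) (a j) ≤ 0 := by
      apply discrim_le_zero
      intro x
      have := hnonneg j x
      nlinarith [sq_nonneg x]
    rw [discrim] at hd
    nlinarith
  -- rewrite the function
  have hfun : (fun t : ℝ =>
        ∑ j, (Real.sqrt ((star (z + t • u) ⬝ᵥ ((Q j) *ᵥ (z + t • u))).re + ε)
              - Real.sqrt (y j + ε)) ^ 2)
      = fun t : ℝ => ∑ j, (Real.sqrt (c j * t^2 + 2 * b j * t + a j + ε) - s j) ^ 2 := by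
    funext t
    refine Finset.sum_congr rfl fun j _ => ?_
    rw [quad_expand (Q j) (hQ j).1 z u t]
  rw [hfun]
  rw [show (2:ℕ) = 1 + 1 from rfl, iteratedDeriv_succ, iteratedDeriv_one]
  have hd1 : deriv (fun t : ℝ => ∑ j, (Real.sqrt (c j * t^2 + 2 * b j * t + a j + ε) - s j) ^ 2)
      = fun t : ℝ => ∑ j, ((2 * c j * t + 2 * b j)
          - s j * (2 * c j * t + 2 * b j) / Real.sqrt (c j * t^2 + 2 * b j * t + a j + ε)) := by
    funext t
    exact (HasDerivAt.fun_sum fun j _ => sqrtQuadDeriv1 (a j) (b j) (c j) (s j) ε (hP j) t).deriv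
  rw [hd1]
  have h2 : ∀ j, ∃ d, d ≤ 2 * c j ∧
      HasDerivAt (fun t : ℝ => (2 * c j * t + 2 * b j)
        - s j * (2 * c j * t + 2 * b j) / Real.sqrt (c j * t^2 + 2 * b j * t + a j + ε)) d 0 :=
    fun j => sqrtQuadDeriv2 (a j) (b j) (c j) (s j) ε hε (Real.sqrt_nonneg _) (hc j) (hb j) (hP j)
  choose d hdle hdH using h2
  have hder : deriv (fun t : ℝ => ∑ j, ((2 * c j * t + 2 * b j)
          - s j * (2 * c j * t + 2 * b j) / Real.sqrt (c j * t^2 + 2 * b j * t + a j + ε))) 0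
      = ∑ j, d j := (HasDerivAt.fun_sum fun j _ => hdH j).deriv
  rw [hder]
  have hmv : (∑ j, Q j) *ᵥ u = ∑ j, (Q j) *ᵥ u := by
    ext i
    simp only [mulVec, dotProduct, Finset.sum_apply, Matrix.sum_apply, Finset.sum_mul]
    exact Finset.sum_comm
  have hsum : ∑ j, c j = (star u ⬝ᵥ ((∑ j, Q j) *ᵥ u)).re := by
    rw [hmv]
    have hdp : star u ⬝ᵥ (∑ j, (Q j) *ᵥ u) = ∑ j, star u ⬝ᵥ ((Q j) *ᵥ u) := by
      simp only [dotProduct, Finset.sum_apply, Finset.mul_sum]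
      exact Finset.sum_comm
    rw [hdp, Complex.re_sum]
  calc ∑ j, d j ≤ ∑ j, 2 * c j := Finset.sum_le_sum fun j _ => hdle j
    _ = 2 * ∑ j, c j := by rw [Finset.mul_sum]
    _ = 2 * (star u ⬝ᵥ ((∑ j, Q j) *ᵥ u)).re := by rw [hsum]
    _ ≤ 2 * (‖Matrix.toEuclideanCLM (𝕜 := ℂ) (∑ j, Q j)‖ * ∑ i, ‖u i‖^2) := by
        have := re_dot_le (∑ j, Q j) u
        linarith
    _ = 2 * specNorm (∑ j, Q j) * ∑ i, ‖u i‖ ^ 2 := by rw [specNorm]; ring
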